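/- (Mutual determination via the Galois connection) For all p ∈ [0,1], Q⁻_{X,C}(p) = cl co ⋃ {D ∈ 𝒢(ℝ^d,C) : F^△_{X,C}(D) ≥ p}, and for all D ∈ 𝒢(ℝ^d,C), F^△_{X,C}(D) = sup{p ∈ [0,1] : D ⊆ Q⁻_{X,C}(p)}. -/
import Mathlib


open MeasureTheory Set Filter
open scoped ENNReal Pointwise

noncomputable section

def dotp {d : ℕ} (w z : Fin d → ℝ) : ℝ := ∑ i, w i * z i


def dualCone {d : ℕ} (C : Set (Fin d → ℝ)) : Set (Fin d → ℝ) :=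
  {w | ∀ z ∈ C, 0 ≤ dotp w z}

def Fw {d : ℕ} {Ω : Type*} [MeasurableSpace Ω] (μ : Measure Ω)
    (X : Ω → Fin d → ℝ) (w z : Fin d → ℝ) : ℝ≥0∞ :=
  μ {ω | dotp w (X ω) ≤ dotp w z}

lemma dotp_add {d : ℕ} (w z c : Fin d → ℝ) : dotp w (z + c) = dotp w z + dotp w c := by
  simp [dotp, mul_add, Finset.sum_add_distrib]

lemma dotp_smul {d : ℕ} (a : ℝ) (w z : Fin d → ℝ) : dotp w (a • z) = a * dotp w z := by
  simp only [dotp, Finset.mul_sum]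
  exact Finset.sum_congr rfl fun i _ => by simp [Pi.smul_apply, smul_eq_mul]; ring

lemma continuous_dotp {d : ℕ} (w : Fin d → ℝ) : Continuous (dotp w) := by
  unfold dotp
  exact continuous_finset_sum _ fun i _ => continuous_const.mul (continuous_apply i)

lemma Fw_mono {d : ℕ} {Ω : Type*} [MeasurableSpace Ω] (μ : Measure Ω)
    (X : Ω → Fin d → ℝ) (w : Fin d → ℝ) {z z' : Fin d → ℝ}
    (h : dotp w z ≤ dotp w z') : Fw μ X w z ≤ Fw μ X w z' := by
  apply measure_mono
  intro ω hω; exact le_trans hω h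

lemma isClosed_Fw_level {d : ℕ} {Ω : Type*} [MeasurableSpace Ω] (μ : Measure Ω)
    [IsProbabilityMeasure μ] (X : Ω → Fin d → ℝ) (hX : Measurable X)
    (w : Fin d → ℝ) (p : ℝ≥0∞) : IsClosed {z | p ≤ Fw μ X w z} := by
  rw [← isOpen_compl_iff]
  rw [isOpen_iff_mem_nhds]
  intro z hz
  simp only [mem_compl_iff, mem_setOf_eq, not_le] at hz
  have hY : Measurable fun ω => dotp w (X ω) := (continuous_dotp w).measurable.comp hX
  set t := dotp w z with ht
  have hiter : ⋂ n : ℕ, {ω | dotp w (X ω) ≤ t + 1 / (n + 1)} = {ω | dotp w (X ω) ≤ t} := by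
    ext ω
    simp only [mem_iInter, mem_setOf_eq]
    constructor
    · intro h
      have := ge_of_tendsto' (tendsto_const_nhds.add
        (tendsto_one_div_add_atTop_nhds_zero_nat)) h
      simpa using this
    · intro h n
      have : (0:ℝ) < 1 / (n + 1) := by positivity
      linarith
  have htend : Tendsto (fun n : ℕ => μ {ω | dotp w (X ω) ≤ t + 1 / (n + 1)}) atTop
      (nhds (μ {ω | dotp w (X ω) ≤ t})) := by
    rw [← hiter]
    apply tendsto_measure_iInter_atTop
    · intro n
      exact (hY (measurableSet_Iic (a := t + 1/(n+1)))).nullMeasurableSet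
    · intro m n hmn ω hω
      simp only [mem_setOf_eq] at hω ⊢
      have hmn' : (m:ℝ) ≤ n := Nat.cast_le.mpr hmn
      have : (1:ℝ) / (n + 1) ≤ 1 / (m + 1) := by
        apply one_div_le_one_div_of_le
        · positivity
        · linarith
      linarith
    · exact ⟨0, measure_ne_top _ _⟩
  have : ∀ᶠ n : ℕ in atTop, μ {ω | dotp w (X ω) ≤ t + 1 / (n + 1)} < p :=
    htend.eventually_lt_const hz
  obtain ⟨n, hn⟩ := this.exists
  refine Filter.mem_of_superset ((continuous_dotp w).continuousAt.preimage_mem_nhds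
    (Iio_mem_nhds (show t < t + 1/(n+1) from lt_add_of_pos_right t (by positivity)))) ?_
  intro z' hz'
  simp only [mem_preimage, mem_Iio] at hz'
  simp only [mem_compl_iff, mem_setOf_eq, not_le]
  calc Fw μ X w z' ≤ μ {ω | dotp w (X ω) ≤ t + 1/(n+1)} := by
        apply measure_mono; intro ω hω; exact le_trans hω hz'.le
    _ < p := hn

lemma convex_Fw_level {d : ℕ} {Ω : Type*} [MeasurableSpace Ω] (μ : Measure Ω)
    (X : Ω → Fin d → ℝ) (w : Fin d → ℝ) (p : ℝ≥0∞) :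
    Convex ℝ {z | p ≤ Fw μ X w z} := by
  intro z1 hz1 z2 hz2 a b ha hb hab
  simp only [mem_setOf_eq] at *
  have key : min (dotp w z1) (dotp w z2) ≤ dotp w (a • z1 + b • z2) := by
    rw [dotp_add, dotp_smul, dotp_smul]
    rcases le_total (dotp w z1) (dotp w z2) with h | h
    · rw [min_eq_left h]
      have e : a * dotp w z1 + b * dotp w z1 = dotp w z1 := by rw [← add_mul, hab, one_mul]
      have q := mul_le_mul_of_nonneg_left h hb
      linarith
    · rw [min_eq_right h]
      have e : a * dotp w z2 + b * dotp w z2 = dotp w z2 := by rw [← add_mul, hab, one_mul]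
      have q := mul_le_mul_of_nonneg_left h ha
      linarith
  rcases le_total (dotp w z1) (dotp w z2) with h | h
  · rw [min_eq_left h] at key
    exact le_trans hz1 (Fw_mono μ X w key)
  · rw [min_eq_right h] at key
    exact le_trans hz2 (Fw_mono μ X w key)

def FC {d : ℕ} {Ω : Type*} [MeasurableSpace Ω] (μ : Measure Ω)
    (X : Ω → Fin d → ℝ) (C : Set (Fin d → ℝ)) (z : Fin d → ℝ) : ℝ≥0∞ :=
  ⨅ w ∈ dualCone C \ {0}, Fw μ X w z

def Qlo {d : ℕ} {Ω : Type*} [MeasurableSpace Ω] (μ : Measure Ω)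
    (X : Ω → Fin d → ℝ) (C : Set (Fin d → ℝ)) (p : ℝ≥0∞) : Set (Fin d → ℝ) :=
  {z | p ≤ FC μ X C z}

lemma mem_Qlo_iff {d : ℕ} {Ω : Type*} [MeasurableSpace Ω] (μ : Measure Ω)
    (X : Ω → Fin d → ℝ) (C : Set (Fin d → ℝ)) (p : ℝ≥0∞) (z : Fin d → ℝ) :
    z ∈ Qlo μ X C p ↔ ∀ w ∈ dualCone C \ {0}, p ≤ Fw μ X w z := by
  simp [Qlo, FC, le_iInf_iff]

lemma Qlo_eq_iInter {d : ℕ} {Ω : Type*} [MeasurableSpace Ω] (μ : Measure Ω)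
    (X : Ω → Fin d → ℝ) (C : Set (Fin d → ℝ)) (p : ℝ≥0∞) :
    Qlo μ X C p = ⋂ w ∈ dualCone C \ {0}, {z | p ≤ Fw μ X w z} := by
  ext z
  simp [mem_Qlo_iff, mem_iInter]

lemma isClosed_Qlo {d : ℕ} {Ω : Type*} [MeasurableSpace Ω] (μ : Measure Ω)
    [IsProbabilityMeasure μ] (X : Ω → Fin d → ℝ) (hX : Measurable X)
    (C : Set (Fin d → ℝ)) (p : ℝ≥0∞) : IsClosed (Qlo μ X C p) := by
  rw [Qlo_eq_iInter]
  exact isClosed_biInter fun w _ => isClosed_Fw_level μ X hX w p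

lemma convex_Qlo {d : ℕ} {Ω : Type*} [MeasurableSpace Ω] (μ : Measure Ω)
    (X : Ω → Fin d → ℝ) (C : Set (Fin d → ℝ)) (p : ℝ≥0∞) : Convex ℝ (Qlo μ X C p) := by
  rw [Qlo_eq_iInter]
  exact convex_iInter₂ fun w _ => convex_Fw_level μ X w p

lemma Qlo_add_C {d : ℕ} {Ω : Type*} [MeasurableSpace Ω] (μ : Measure Ω)
    (X : Ω → Fin d → ℝ) (C : Set (Fin d → ℝ)) (hCne : C.Nonempty)
    (hCcone : ∀ r : ℝ, 0 ≤ r → ∀ x ∈ C, r • x ∈ C) (p : ℝ≥0∞) :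
    Qlo μ X C p + C = Qlo μ X C p := by
  have h0 : (0 : Fin d → ℝ) ∈ C := by
    obtain ⟨x, hx⟩ := hCne
    simpa using hCcone 0 le_rfl x hx
  apply Subset.antisymm
  · rintro _ ⟨z, hz, c, hc, rfl⟩
    rw [mem_Qlo_iff] at hz ⊢
    intro w hw
    refine le_trans (hz w hw) (Fw_mono μ X w ?_)
    rw [dotp_add]
    have := hw.1 c hc
    linarith
  · intro z hz
    exact ⟨z, hz, 0, h0, add_zero z⟩

theorem stmt_16 {d : ℕ} {Ω : Type*} [MeasurableSpace Ω] (μ : Measure Ω)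
    [IsProbabilityMeasure μ] (X : Ω → Fin d → ℝ) (hX : Measurable X)
    (C : Set (Fin d → ℝ)) (hCne : C.Nonempty) (hCcl : IsClosed C)
    (hCco : Convex ℝ C) (hCcone : ∀ r : ℝ, 0 ≤ r → ∀ x ∈ C, r • x ∈ C)
    (hCproper : C ≠ univ) :
    (∀ p : ℝ≥0∞, p ≤ 1 →
      Qlo μ X C p = closure (convexHull ℝ
        (⋃₀ {D : Set (Fin d → ℝ) | D = closure (convexHull ℝ (D + C)) ∧
              p ≤ ⨅ z ∈ D, FC μ X C z}))) ∧
    (∀ D : Set (Fin d → ℝ), D = closure (convexHull ℝ (D + C)) →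
      (⨅ z ∈ D, FC μ X C z) ⊓ 1 =
        sSup {p : ℝ≥0∞ | p ≤ 1 ∧ D ⊆ Qlo μ X C p}) := by
  constructor
  · intro p hp
    have hclosed := isClosed_Qlo μ X hX C p
    have hconv := convex_Qlo μ X C p
    apply Subset.antisymm
    · -- Qlo ⊆ closure convexHull ⋃₀
      intro z hz
      apply subset_closure
      apply subset_convexHull
      refine mem_sUnion.mpr ⟨Qlo μ X C p, ⟨?_, ?_⟩, hz⟩
      · rw [Qlo_add_C μ X C hCne hCcone p, hconv.convexHull_eq, hclosed.closure_eq]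
      · exact le_iInf₂ fun z hz => hz
    · refine closure_minimal (convexHull_min (sUnion_subset ?_) hconv) hclosed
      rintro D ⟨-, hD⟩ z hz
      exact le_trans hD (biInf_le _ hz)
  · intro D hD
    have hset : {p : ℝ≥0∞ | p ≤ 1 ∧ D ⊆ Qlo μ X C p} = Iic ((⨅ z ∈ D, FC μ X C z) ⊓ 1) := by
      ext p
      simp only [mem_setOf_eq, mem_Iic, le_inf_iff, Set.subset_def]
      constructor
      · rintro ⟨h1, h2⟩
        exact ⟨le_iInf₂ fun z hz => h2 z hz, h1⟩
      · rintro ⟨h1, h2⟩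
        exact ⟨h2, fun z hz => le_trans h1 (biInf_le _ hz)⟩
    rw [hset, csSup_Iic]
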